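/- Let N ≥ 2 and let a, b be integers such that gcd(a, b) is relatively prime to N. Let β = [[a,b],[c,d]] and β' = [[a,b],[c',d']] be matrices in M₂(ℤ) with det(β) ≡ det(β') ≡ 1 (mod N). Then there exists a matrix α ∈ Γ¹(N) such that αβ ≡ β' (mod N). -/
import Mathlib


noncomputable section

open Complex Matrix UpperHalfPlane MatrixGroups

abbrev SL2Z := Matrix.SpecialLinearGroup (Fin 2) ℤ

/-- `e2pi z = exp(2πiz)`. -/
def e2pi (z : ℂ) : ℂ := Complex.exp (2 * Real.pi * Complex.I * z)

/-- `qpow τ x = q^x = exp(2πixτ)`. -/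
def qpow (τ : ℍ) (x : ℂ) : ℂ := Complex.exp (2 * Real.pi * Complex.I * x * τ)

/-- The lattice point `mτ + n` for `p = (m, n)`. -/
def latticePt (τ : ℍ) (p : ℤ × ℤ) : ℂ := (p.1 : ℂ) * τ + (p.2 : ℂ)

/-- Weierstrass invariant `g₂` of the lattice `[τ, 1]`. -/
def g2fun (τ : ℍ) : ℂ := 60 * ∑' p : {p : ℤ × ℤ // p ≠ 0}, (latticePt τ p.1)⁻¹ ^ 4

/-- Weierstrass invariant `g₃` of the lattice `[τ, 1]`. -/
def g3fun (τ : ℍ) : ℂ := 140 * ∑' p : {p : ℤ × ℤ // p ≠ 0}, (latticePt τ p.1)⁻¹ ^ 6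

/-- The discriminant `Δ = g₂³ - 27g₃²`. -/
def deltaFun (τ : ℍ) : ℂ := g2fun τ ^ 3 - 27 * g3fun τ ^ 2

/-- The elliptic modular function `j = 1728 g₂³/Δ`. -/
def jfun (τ : ℍ) : ℂ := 1728 * g2fun τ ^ 3 / deltaFun τ

/-- The Weierstrass `℘`-function of the lattice `[τ, 1]`. -/
def wpfun (τ : ℍ) (z : ℂ) : ℂ :=
  z⁻¹ ^ 2 + ∑' p : {p : ℤ × ℤ // p ≠ 0},
    ((z - latticePt τ p.1)⁻¹ ^ 2 - (latticePt τ p.1)⁻¹ ^ 2)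

/-- The Fricke function `f_v = -2⁷3⁵ (g₂g₃/Δ) ℘(v₁τ + v₂)`. -/
def fricke (v : ℚ × ℚ) (τ : ℍ) : ℂ :=
  -(2 ^ 7 * 3 ^ 5 : ℂ) * g2fun τ * g3fun τ / deltaFun τ *
    wpfun τ ((v.1 : ℂ) * τ + (v.2 : ℂ))

/-- The Siegel function `g_v`, via its `q`-product expansion. -/
def siegel (v : ℚ × ℚ) (τ : ℍ) : ℂ :=
  -Complex.exp (Real.pi * Complex.I * (v.2 : ℂ) * ((v.1 : ℂ) - 1)) *
    qpow τ (((v.1 : ℂ) ^ 2 - (v.1 : ℂ) + 1 / 6) / 2) *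
    (1 - qpow τ (v.1 : ℂ) * e2pi (v.2 : ℂ)) *
    ∏' n : ℕ,
      ((1 - qpow τ ((n : ℂ) + 1 + (v.1 : ℂ)) * e2pi (v.2 : ℂ)) *
       (1 - qpow τ ((n : ℂ) + 1 - (v.1 : ℂ)) * e2pi (-(v.2 : ℂ))))

/-- Extend a function on `ℍ` to `ℂ` by junk values. -/
def asComplexFun (h : ℍ → ℂ) : ℂ → ℂ :=
  fun z => if hz : 0 < z.im then h ⟨z, hz⟩ else 0

/-- `h` is holomorphic on `ℍ`. -/
def IsHoloOnH (h : ℍ → ℂ) : Prop :=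
  DifferentiableOn ℂ (asComplexFun h) {z : ℂ | 0 < z.im}

/-- `h` is meromorphic on `ℍ`. -/
def IsMeromOnH (h : ℍ → ℂ) : Prop :=
  MeromorphicOn (asComplexFun h) {z : ℂ | 0 < z.im}

/-- `v ∈ V_N`: `v = (a/N, b/N)` with `gcd(a, b, N) = 1`. -/
def InVN (N : ℕ) (v : ℚ × ℚ) : Prop :=
  ∃ a b : ℤ, v.1 = (a : ℚ) / (N : ℚ) ∧ v.2 = (b : ℚ) / (N : ℚ) ∧
    Int.gcd a (Int.gcd b (N : ℤ)) = 1

/-- `v ∈ ℤ²`. -/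
def IsIntPair (v : ℚ × ℚ) : Prop := ∃ m n : ℤ, v.1 = (m : ℚ) ∧ v.2 = (n : ℚ)

/-- `u ≡ v (mod ℤ²)`. -/
def EqModZ2 (u v : ℚ × ℚ) : Prop := IsIntPair (u.1 - v.1, u.2 - v.2)

/-- `u ≡ ±v (mod ℤ²)`. -/
def PMEquiv (u v : ℚ × ℚ) : Prop := EqModZ2 u v ∨ EqModZ2 u (-v.1, -v.2)

/-- The action `v ↦ ᵗγ·v` of a matrix on a rational pair. -/
def tAct (γ : Matrix (Fin 2) (Fin 2) ℤ) (v : ℚ × ℚ) : ℚ × ℚ :=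
  ((γ 0 0 : ℚ) * v.1 + (γ 1 0 : ℚ) * v.2, (γ 0 1 : ℚ) * v.1 + (γ 1 1 : ℚ) * v.2)

/-- `h` agrees, near `i∞`, with the expansion `∑_{n ≥ n₀} σ_d(c_n) q^{n/N}` where the
coefficients `c_n ∈ ℚ(ζ_N)` are recorded as polynomials in `ζ_N` with rational coefficients
and `σ_d(c_n)` is obtained by evaluating at `ζ_N^d`. -/
def QExp (N : ℕ) (c : ℤ → Polynomial ℚ) (n₀ : ℤ) (d : ℤ) (h : ℍ → ℂ) : Prop :=
  ∃ A : ℝ, ∀ τ : ℍ, A < τ.im →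
    h τ = ∑' n : ℕ, (Polynomial.aeval (e2pi ((d : ℂ) / (N : ℂ))) (c (n₀ + (n : ℤ)))) *
      qpow τ (((n₀ + (n : ℤ) : ℤ) : ℂ) / (N : ℂ))

/-- `h` is meromorphic at `i∞`, with a Fourier expansion in powers of `q^{1/N}`. -/
def CuspExp (N : ℕ) (h : ℍ → ℂ) : Prop :=
  ∃ (n₀ : ℤ) (c : ℤ → ℂ) (A : ℝ), ∀ τ : ℍ, A < τ.im →
    h τ = ∑' n : ℕ, c (n₀ + (n : ℤ)) * qpow τ (((n₀ + (n : ℤ) : ℤ) : ℂ) / (N : ℂ))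

/-- `h` has a Fourier expansion in powers of `q^{1/N}` with rational coefficients. -/
def RatQExp (N : ℕ) (h : ℍ → ℂ) : Prop :=
  ∃ (n₀ : ℤ) (c : ℤ → ℚ) (A : ℝ), ∀ τ : ℍ, A < τ.im →
    h τ = ∑' n : ℕ, (c (n₀ + (n : ℤ)) : ℂ) * qpow τ (((n₀ + (n : ℤ) : ℤ) : ℂ) / (N : ℂ))

/-- `γ ∈ Γ(N)`, i.e. `γ ≡ I₂ (mod N)`. -/
def InGammaN (N : ℕ) (γ : SL2Z) : Prop :=
  ((γ 0 0 : ℤ) : ZMod N) = 1 ∧ ((γ 0 1 : ℤ) : ZMod N) = 0 ∧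
  ((γ 1 0 : ℤ) : ZMod N) = 0 ∧ ((γ 1 1 : ℤ) : ZMod N) = 1

/-- `γ ∈ Γ¹(N)`, i.e. `γ ≡ [[1,0],[*,1]] (mod N)`. -/
def InGamma1Lower (N : ℕ) (γ : SL2Z) : Prop :=
  ((γ 0 0 : ℤ) : ZMod N) = 1 ∧ ((γ 0 1 : ℤ) : ZMod N) = 0 ∧ ((γ 1 1 : ℤ) : ZMod N) = 1

/-- `γ ∈ Γ₁(N)`, i.e. `γ ≡ [[1,*],[0,1]] (mod N)`. -/
def InGamma1Upper (N : ℕ) (γ : SL2Z) : Prop :=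
  ((γ 0 0 : ℤ) : ZMod N) = 1 ∧ ((γ 1 0 : ℤ) : ZMod N) = 0 ∧ ((γ 1 1 : ℤ) : ZMod N) = 1

/-- `h ∈ F_N`: meromorphic on `ℍ`, modular for `Γ(N)`, meromorphic at the cusps and
with Fourier coefficients in `ℚ(ζ_N)`. -/
structure MemFN (N : ℕ) (h : ℍ → ℂ) : Prop where
  merom : IsMeromOnH h
  modular : ∀ γ : SL2Z, InGammaN N γ → ∀ τ : ℍ, h (γ • τ) = h τ
  cusp : ∀ γ : SL2Z, CuspExp N (fun τ => h (γ • τ))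
  coeff : ∃ (c : ℤ → Polynomial ℚ) (n₀ : ℤ), QExp N c n₀ 1 h

/-- `h ∈ F¹_N(ℚ)`: meromorphic on `ℍ`, modular for `Γ¹(N)`, meromorphic at the cusps and
with rational Fourier coefficients. -/
structure MemF1N (N : ℕ) (h : ℍ → ℂ) : Prop where
  merom : IsMeromOnH h
  modular : ∀ γ : SL2Z, InGamma1Lower N γ → ∀ τ : ℍ, h (γ • τ) = h τ
  cusp : ∀ γ : SL2Z, CuspExp N (fun τ => h (γ • τ))
  ratQ : RatQExp N h

/-- `h ∈ O¹_N(ℚ)`: the weakly holomorphic elements of `F¹_N(ℚ)`. -/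
def MemO1N (N : ℕ) (h : ℍ → ℂ) : Prop := MemF1N N h ∧ IsHoloOnH h

/-- `β ∈ SL₂(ℤ)` is a lift of `[[1,0],[0,det γ]]⁻¹ · γ (mod N)`, so that
`γ ≡ [[1,0],[0,det γ]] · β (mod N)`. -/
def SLCompat (N : ℕ) (γ : Matrix (Fin 2) (Fin 2) ℤ) (β : SL2Z) : Prop :=
  ((β 0 0 : ℤ) : ZMod N) = ((γ 0 0 : ℤ) : ZMod N) ∧
  ((β 0 1 : ℤ) : ZMod N) = ((γ 0 1 : ℤ) : ZMod N) ∧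
  ((γ.det : ℤ) : ZMod N) * ((β 1 0 : ℤ) : ZMod N) = ((γ 1 0 : ℤ) : ZMod N) ∧
  ((γ.det : ℤ) : ZMod N) * ((β 1 1 : ℤ) : ZMod N) = ((γ 1 1 : ℤ) : ZMod N)

/-- Condition (F3): for every `γ ∈ GL₂(ℤ/Nℤ)`, written as `[[1,0],[0,d]]·β` with
`d = det γ` and `β ∈ SL₂(ℤ/Nℤ)`, one has `h_v^γ = h_{ᵗγ·v}`; here `h_v^γ = (σ_d h_v) ∘ β`
is expressed through `q`-expansions. -/
def GaloisCompat (N : ℕ) (h : (ℚ × ℚ) → ℍ → ℂ) : Prop :=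
  ∀ v : ℚ × ℚ, InVN N v →
    ∀ γ : Matrix (Fin 2) (Fin 2) ℤ, Int.gcd γ.det (N : ℤ) = 1 →
      ∀ β : SL2Z, SLCompat N γ β →
        ∀ (c : ℤ → Polynomial ℚ) (n₀ : ℤ), QExp N c n₀ 1 (h v) →
          QExp N c n₀ γ.det (fun τ => h (tAct γ v) (β⁻¹ • τ))

/-- A Fricke family of level `N`. -/
structure IsFrickeFamily (N : ℕ) (h : (ℚ × ℚ) → ℍ → ℂ) : Prop where
  mem : ∀ v : ℚ × ℚ, InVN N v → MemFN N (h v)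
  holo : ∀ v : ℚ × ℚ, InVN N v → IsHoloOnH (h v)
  pm : ∀ u v : ℚ × ℚ, InVN N u → InVN N v → PMEquiv u v → h u = h v
  galois : GaloisCompat N h

/-- `ζ₃ = e^{2πi/3}` as a point of `ℍ`. -/
def zeta3H : ℍ := ⟨Complex.exp (2 * Real.pi * Complex.I / 3), by
  have h : (2 * Real.pi * Complex.I / 3 : ℂ) = Complex.I * ((2 * Real.pi / 3 : ℝ) : ℂ) := by
    push_cast; ring
  rw [h]
  rw [show Complex.I * ((2 * Real.pi / 3 : ℝ) : ℂ) = (((2 * Real.pi / 3 : ℝ) : ℂ) * Complex.I) by ring]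
  rw [Complex.exp_ofReal_mul_I_im]
  exact Real.sin_pos_of_pos_of_lt_pi (by positivity) (by nlinarith [Real.pi_pos])⟩

/-- `ζ₄ = i` as a point of `ℍ`. -/
def zeta4H : ℍ := ⟨Complex.I, by simp⟩

/-- The set of points of `ℂ` lying in the `SL₂(ℤ)`-orbit of `ζ₃` or `ζ₄`. -/
def exceptionalSet : Set ℂ :=
  {z : ℂ | ∃ γ : SL2Z, z = ((γ • zeta3H : ℍ) : ℂ) ∨ z = ((γ • zeta4H : ℍ) : ℂ)}

/-- `ℍ' = ℍ ∖ {γζ₃, γζ₄ : γ ∈ SL₂(ℤ)}`, as a subset of `ℂ`. -/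
def upperHalfPlaneSlit : Set ℂ := {z : ℂ | 0 < z.im} \ exceptionalSet

/-- `h` is holomorphic on `ℍ'`. -/
def IsHoloOnH' (h : ℍ → ℂ) : Prop :=
  DifferentiableOn ℂ (asComplexFun h) upperHalfPlaneSlit

/-- Multiplication of a point of `ℍ` by `4`. -/
def fourH (τ : ℍ) : ℍ := ⟨4 * (τ : ℂ), by
  have h : (0:ℝ) < (τ : ℂ).im := τ.2
  have h4 : (4 * (τ : ℂ)).im = 4 * (τ : ℂ).im := by
    simp [Complex.mul_im]
  rw [h4]; linarith⟩


/-- Let `N ≥ 2` and let `a, b` be integers with `gcd(a,b)` prime to `N`.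
If `β = [[a,b],[c,d]]` and `β' = [[a,b],[c',d']]` have determinants `≡ 1 (mod N)`, then
there is `α ∈ Γ¹(N)` with `αβ ≡ β' (mod N)`. -/
theorem exists_gamma1_translate (N : ℕ) (hN : 2 ≤ N) (a b c d c' d' : ℤ)
    (hab : Nat.Coprime (Int.gcd a b) N)
    (hβ : (!![a, b; c, d] : Matrix (Fin 2) (Fin 2) ℤ).det ≡ 1 [ZMOD (N : ℤ)])
    (hβ' : (!![a, b; c', d'] : Matrix (Fin 2) (Fin 2) ℤ).det ≡ 1 [ZMOD (N : ℤ)]) :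
    ∃ α : SL2Z, InGamma1Lower N α ∧
      ∀ i j : Fin 2, ((α : Matrix (Fin 2) (Fin 2) ℤ) * !![a, b; c, d]) i j ≡
        (!![a, b; c', d'] : Matrix (Fin 2) (Fin 2) ℤ) i j [ZMOD (N : ℤ)] := by
  set x : ℤ := c' * d - d' * c with hx
  have hdet : (!![(1:ℤ), 0; x, 1] : Matrix (Fin 2) (Fin 2) ℤ).det = 1 := by
    simp [Matrix.det_fin_two_of]
  refine ⟨⟨!![(1:ℤ), 0; x, 1], hdet⟩, ?_, ?_⟩
  · refine ⟨?_, ?_, ?_⟩ <;> simp [SpecialLinearGroup.coe_mk]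
  · have hu : ((N : ℤ)) ∣ (a * d - b * c - 1) := by
      have := hβ
      rw [Matrix.det_fin_two_of] at this
      simpa [Int.ModEq, Int.emod_emod_of_dvd] using (Int.ModEq.dvd this.symm)
    have hv : ((N : ℤ)) ∣ (a * d' - b * c' - 1) := by
      have := hβ'
      rw [Matrix.det_fin_two_of] at this
      simpa using (Int.ModEq.dvd this.symm)
    obtain ⟨k, hk⟩ := hu
    obtain ⟨k', hk'⟩ := hv
    intro i j
    have hmul : (!![(1:ℤ), 0; x, 1] : Matrix (Fin 2) (Fin 2) ℤ) * !![a, b; c, d]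
        = !![a, b; x * a + c, x * b + d] := by
      rw [Matrix.mul_fin_two]; congr 1 <;> ring
    fin_cases i <;> fin_cases j <;>
      simp only [SpecialLinearGroup.coe_mk, hmul, Fin.mk_zero, Fin.mk_one, Matrix.of_apply,
        Matrix.cons_val', Matrix.cons_val_zero, Matrix.cons_val_one, Matrix.head_cons,
        Matrix.head_fin_const, Matrix.empty_val', Matrix.cons_val_fin_one]
    · exact Int.ModEq.refl a
    · exact Int.ModEq.refl b
    · rw [Int.modEq_iff_dvd]
      exact ⟨c * k' - c' * k, by linear_combination c * hk' - c' * hk⟩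
    · rw [Int.modEq_iff_dvd]
      exact ⟨d * k' - d' * k, by linear_combination d * hk' - d' * hk⟩


end
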